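/- arXiv:0711.3496 — 9 statements merged into one kernel-verified Lean document; each statement's English description precedes it below -/
import Mathlib

section
/- If Q(t) = ∑_{i=0}^k a_i t^i is a univariate polynomial of degree k ≥ 2 with nonnegative coefficients and all real roots, and C = inf_{t>0} Q(t)/t, then Q'(0) ≥ ((k-1)/k)^{k-1} · C. -/
/-!
Real-rootedness and positivity of `Q` on `(0, ∞)` give `Q = a ∏ᵢ (X + rᵢ)` with `rᵢ ≥ 0`, so that
`Q'(0) = a ∑ᵢ ∏_{j ≠ i} rⱼ`. If all `rᵢ > 0`, put `s = ∑ᵢ 1 / rᵢ`; AM-GM applied to the factors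
`1 + t / rᵢ` gives `Q(t) ≤ Q(0) (1 + t s / k) ^ k`, and at the minimiser `t = k / ((k - 1) s)` of the
right-hand side divided by `t` this reads `((k - 1) / k) ^ (k - 1) · Q(t) / t ≤ Q(0) s = Q'(0)`.
Zero roots are handled by shifting all roots by `δ > 0` and letting `δ → 0`.
-/

open Polynomial Finset Filter Topology

theorem Real.prod_le_arith_mean_pow {ι : Type*} (s : Finset ι) (f : ι → ℝ)
    (hf : ∀ i ∈ s, 0 ≤ f i) : ∏ i ∈ s, f i ≤ ((∑ i ∈ s, f i) / #s) ^ #s := by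
  rcases s.eq_empty_or_nonempty with rfl | hs
  · simp
  have amgm := Real.geom_mean_le_arith_mean s (fun _ ↦ 1) f (fun _ _ ↦ zero_le_one)
    (by simpa using hs) hf
  simp only [Real.rpow_one, sum_const, nsmul_eq_mul, mul_one, one_mul] at amgm
  calc ∏ i ∈ s, f i = ((∏ i ∈ s, f i) ^ (#s : ℝ)⁻¹) ^ #s :=
        (Real.rpow_inv_natCast_pow (prod_nonneg hf) (by simpa using hs.ne_empty)).symm
    _ ≤ _ := pow_le_pow_left₀ (Real.rpow_nonneg (prod_nonneg hf) _) amgm _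

theorem Finset.sum_prod_erase_eq_prod_mul_sum_inv {ι K : Type*} [DecidableEq ι] [Field K]
    (s : Finset ι) (f : ι → K) (hf : ∀ i ∈ s, f i ≠ 0) :
    ∑ i ∈ s, ∏ j ∈ s.erase i, f j = (∏ i ∈ s, f i) * ∑ i ∈ s, (f i)⁻¹ := by
  rw [mul_sum]
  refine sum_congr rfl fun i hi ↦ ?_
  rw [← mul_prod_erase s f hi, mul_comm (f i), mul_assoc, mul_inv_cancel₀ (hf i hi), mul_one]

theorem Finset.prod_add_le_prod_mul_pow {ι : Type*} (s : Finset ι) {r : ι → ℝ}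
    (hr : ∀ i ∈ s, 0 < r i) {t : ℝ} (ht : 0 ≤ t) :
    ∏ i ∈ s, (t + r i) ≤ (∏ i ∈ s, r i) * (1 + t * (∑ i ∈ s, (r i)⁻¹) / #s) ^ #s := by
  rcases s.eq_empty_or_nonempty with rfl | hs
  · simp
  have hfactor : ∏ i ∈ s, (t + r i) = (∏ i ∈ s, r i) * ∏ i ∈ s, (1 + t * (r i)⁻¹) := by
    rw [← prod_mul_distrib]
    refine prod_congr rfl fun i hi ↦ ?_
    field_simp [(hr i hi).ne']
    ring
  have hmean : (∑ i ∈ s, (1 + t * (r i)⁻¹)) / #s = 1 + t * (∑ i ∈ s, (r i)⁻¹) / #s := by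
    have : (#s : ℝ) ≠ 0 := by simpa using hs.ne_empty
    rw [sum_add_distrib, ← mul_sum]
    field_simp
    simp
  rw [hfactor, ← hmean]
  gcongr
  · exact prod_nonneg fun i hi ↦ (hr i hi).le
  · exact Real.prod_le_arith_mean_pow s _ fun i hi ↦ by have := hr i hi; positivity

theorem exists_pow_mul_prod_add_div_le {ι : Type*} [Fintype ι] [DecidableEq ι] {k : ℕ}
    (hι : Fintype.card ι = k) (hk : 2 ≤ k) {r : ι → ℝ} (hr : ∀ i, 0 < r i) :
    ∃ t > 0, (((k : ℝ) - 1) / k) ^ (k - 1) * ((∏ i, (t + r i)) / t) ≤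
      ∑ i, ∏ j ∈ univ.erase i, r j := by
  have hk1 : 0 < (k : ℝ) - 1 := by
    have : (2 : ℝ) ≤ k := by exact_mod_cast hk
    linarith
  have : Nonempty ι := Fintype.card_pos_iff.mp (by omega)
  set s := ∑ i, (r i)⁻¹
  have hs : 0 < s := sum_pos (fun i _ ↦ inv_pos.mpr (hr i)) univ_nonempty
  set t := k / ((k - 1) * s)
  have ht : 0 < t := by positivity
  have hts : t * s = k / (k - 1) := by
    simp only [t]
    field_simp
  have hmean : 1 + t * s / k = k / (k - 1) := by
    rw [hts]
    field_simp
    ring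
  refine ⟨t, ht, ?_⟩
  have hbound := prod_add_le_prod_mul_pow univ (fun i _ ↦ hr i) ht.le
  rw [card_univ, hι, hmean] at hbound
  rw [sum_prod_erase_eq_prod_mul_sum_inv univ r fun i _ ↦ (hr i).ne']
  calc (((k : ℝ) - 1) / k) ^ (k - 1) * ((∏ i, (t + r i)) / t)
      ≤ (((k : ℝ) - 1) / k) ^ (k - 1) * ((∏ i, r i) * (k / (k - 1)) ^ k / t) := by gcongr
    _ = (((k - 1) / k) * (k / (k - 1))) ^ (k - 1) * ((∏ i, r i) * (t * s) / t) := by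
      rw [hts, ← Nat.sub_add_cancel (by omega : 1 ≤ k), Nat.add_sub_cancel, mul_pow, pow_succ]
      ring
    _ = (∏ i, r i) * s := by
      rw [div_mul_div_cancel₀ (by positivity), div_self hk1.ne', one_pow, one_mul]
      field_simp

theorem Polynomial.eval_derivative_prod_X_sub_C {ι R : Type*} [DecidableEq ι] [CommRing R]
    (s : Finset ι) (ρ : ι → R) (x : R) :
    (∏ i ∈ s, (X - C (ρ i))).derivative.eval x = ∑ i ∈ s, ∏ j ∈ s.erase i, (x - ρ j) := by
  simp [derivative_prod_finset, eval_finsetSum, eval_prod]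

theorem Polynomial.pow_mul_le_eval_derivative_zero {ι : Type*} [Fintype ι] {k : ℕ}
    (hι : Fintype.card ι = k) (hk : 2 ≤ k) {ρ : ι → ℝ} (hρ : ∀ i, ρ i ≤ 0) {a : ℝ} (ha : 0 ≤ a)
    {c : ℝ} (hc : ∀ t > 0, c ≤ (C a * ∏ i, (X - C (ρ i))).eval t / t) :
    (((k : ℝ) - 1) / k) ^ (k - 1) * c ≤ (C a * ∏ i, (X - C (ρ i))).derivative.eval 0 := by
  classical
  set P := ∏ i, (X - C (ρ i))
  set m := (((k : ℝ) - 1) / k) ^ (k - 1)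
  have hm : 0 ≤ m := by
    have : (1 : ℝ) ≤ k := by exact_mod_cast (by omega : 1 ≤ k)
    exact pow_nonneg (div_nonneg (by linarith) (by linarith)) _
  have hshift : ∀ δ > 0, m * c ≤ a * P.derivative.eval δ := by
    intro δ hδ
    obtain ⟨t, ht, hle⟩ :=
      exists_pow_mul_prod_add_div_le hι hk (r := fun i ↦ δ - ρ i) fun i ↦ by linarith [hρ i]
    have hPt : P.eval t ≤ ∏ i, (t + (δ - ρ i)) := by
      simp only [P, eval_prod, eval_sub, eval_X, eval_C]
      exact prod_le_prod (fun i _ ↦ by linarith [hρ i]) fun i _ ↦ by linarith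
    calc m * c ≤ m * (a * (P.eval t / t)) := by
          gcongr
          simpa [mul_div_assoc] using hc t ht
      _ ≤ a * (m * ((∏ i, (t + (δ - ρ i))) / t)) := by
          rw [mul_left_comm]
          gcongr
      _ ≤ a * P.derivative.eval δ := by
          rw [eval_derivative_prod_X_sub_C]
          gcongr
  have hlim : Tendsto (fun δ ↦ a * P.derivative.eval δ) (𝓝[>] 0) (𝓝 (a * P.derivative.eval 0)) :=
    ((P.derivative.continuous.tendsto 0).const_mul a).mono_left nhdsWithin_le_nhds
  simpa [derivative_C_mul] using ge_of_tendsto hlim (eventually_nhdsWithin_of_forall hshift)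

theorem Polynomial.eval_pos_of_coeff_nonneg {p : ℝ[X]} (hp : p ≠ 0)
    (hcoeff : ∀ i, 0 ≤ p.coeff i) {t : ℝ} (ht : 0 < t) : 0 < p.eval t := by
  rw [eval_eq_sum_range]
  refine sum_pos' (fun i _ ↦ mul_nonneg (hcoeff i) (by positivity)) ⟨p.natDegree, ?_, ?_⟩
  · exact self_mem_range_succ _
  · have := (hcoeff p.natDegree).lt_of_ne' (leadingCoeff_ne_zero.mpr hp)
    positivity

theorem Polynomial.splits_of_forall_im_eq_zero {p : ℝ[X]}
    (h : ∀ z : ℂ, (p.map (algebraMap ℝ ℂ)).IsRoot z → z.im = 0) : p.Splits :=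
  (IsAlgClosed.splits _).of_splits_map _ fun z hz ↦
    ⟨z.re, Complex.ext rfl (h z (isRoot_of_mem_roots hz)).symm⟩

/-- If Q(t) = ∑ a_i t^i has degree k ≥ 2, nonnegative coefficients,
positive leading coefficient, and all real roots, and C = inf_{t>0} Q(t)/t, then
Q'(0) ≥ ((k-1)/k)^{k-1} · C. -/
theorem stmt_0 (Q : Polynomial ℝ) (k : ℕ) (hk : 2 ≤ k) (hdeg : Q.natDegree = k)
    (hlead : 0 < Q.leadingCoeff)
    (hcoeff : ∀ i, 0 ≤ Q.coeff i)
    (hroots : ∀ z : ℂ, (Q.map (algebraMap ℝ ℂ)).IsRoot z → z.im = 0)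
    (C : ℝ) (hC : C = sInf {c : ℝ | ∃ t : ℝ, 0 < t ∧ c = Q.eval t / t}) :
    Q.derivative.eval 0 ≥ (((k : ℝ) - 1) / k) ^ (k - 1) * C := by
  have hQ : Q ≠ 0 := leadingCoeff_ne_zero.mp hlead.ne'
  have hsplit : Q.Splits := splits_of_forall_im_eq_zero hroots
  have hfac : Q = Polynomial.C Q.leadingCoeff * ∏ x : Q.roots, (X - Polynomial.C (x : ℝ)) := by
    conv_lhs => rw [hsplit.eq_prod_roots, ← Multiset.map_univ]
    rfl
  have hcard : Fintype.card Q.roots = k := by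
    rw [Multiset.card_coe, ← hsplit.natDegree_eq_card_roots, hdeg]
  have hnonpos : ∀ x : Q.roots, (x : ℝ) ≤ 0 := fun x ↦ not_lt.mp fun hx ↦
    (eval_pos_of_coeff_nonneg hQ hcoeff hx).ne' (isRoot_of_mem_roots (Multiset.coe_mem (x := x)))
  have hlower : ∀ t > 0, C ≤ Q.eval t / t := by
    intro t ht
    rw [hC]
    refine csInf_le ⟨0, ?_⟩ ⟨t, ht, rfl⟩
    rintro _ ⟨u, hu, rfl⟩
    exact (div_pos (eval_pos_of_coeff_nonneg hQ hcoeff hu) hu).le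
  rw [hfac] at hlower ⊢
  exact pow_mul_le_eval_derivative_zero hcard hk hnonpos hlead.le hlower
end

section
/- Equality Q'(0) = ((k-1)/k)^{k-1} · inf_{t>0} Q(t)/t for a degree-k polynomial Q with nonnegative coefficients and all real roots holds if and only if Q(t) = b(t+a)^k for some a, b > 0. -/
/-!
Nonnegative coefficients and real roots give `Q(t) = L ∏ᵢ (t + xᵢ)` with all `xᵢ ≥ 0`. If some
`xᵢ = 0`, then `Q(t)/t → Q'(0)` as `t → 0⁺`, so `inf Q(t)/t ≤ Q'(0)`, which rules out equality
because `((k-1)/k)^(k-1) < 1`. Otherwise `Q(t) = Q(0) ∏ᵢ (1 + t/xᵢ)`, and AM-GM gives the Newton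
bound `Q(t) ≤ Q(0) (1 + c t)^k` with `c = Q'(0) / (k Q(0))`, with equality at some `t > 0` only if
all `xᵢ` coincide. By Bernoulli's inequality, `((k-1)/k)^(k-1) Q(0) (1 + c t)^k / t ≥ Q'(0)`, with
equality at `t₀ = 1 / ((k-1) c)`. Hence `((k-1)/k)^(k-1) inf Q(t)/t ≤ Q'(0)`, and equality forces
equality in AM-GM at `t₀`. For `Q = b (t + a)^k` the Newton bound is an identity, so equality holds.
-/

open Finset Polynomial Filter Topology

namespace Real

variable {ι : Type*} (s : Finset ι) (z : ι → ℝ)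

lemma geom_mean_pow_card (hz : ∀ i ∈ s, 0 ≤ z i) :
    (∏ i ∈ s, z i ^ ((#s : ℝ)⁻¹)) ^ #s = ∏ i ∈ s, z i := by
  rcases s.eq_empty_or_nonempty with rfl | hs
  · simp
  rw [finsetProd_rpow s z hz, rpow_inv_natCast_pow (prod_nonneg hz) hs.card_pos.ne']

lemma prod_le_arith_mean_pow_s1 (hz : ∀ i ∈ s, 0 ≤ z i) :
    ∏ i ∈ s, z i ≤ ((∑ i ∈ s, z i) / #s) ^ #s := by
  rcases s.eq_empty_or_nonempty with rfl | hs
  · simp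
  have hw : ∑ i ∈ s, (#s : ℝ)⁻¹ = 1 := by simp [hs.card_pos.ne']
  have := geom_mean_le_arith_mean_weighted s (fun _ ↦ (#s : ℝ)⁻¹) z
    (fun _ _ ↦ by positivity) hw hz
  rw [← mul_sum, inv_mul_eq_div] at this
  rw [← geom_mean_pow_card s z hz]
  exact pow_le_pow_left₀ (prod_nonneg fun i hi ↦ rpow_nonneg (hz i hi) _) this _

lemma prod_eq_arith_mean_pow_iff (hs : s.Nonempty) (hz : ∀ i ∈ s, 0 ≤ z i) :
    ∏ i ∈ s, z i = ((∑ i ∈ s, z i) / #s) ^ #s ↔ ∀ i ∈ s, ∀ j ∈ s, z i = z j := by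
  have hw : ∑ i ∈ s, (#s : ℝ)⁻¹ = 1 := by simp [hs.card_pos.ne']
  have := geom_mean_eq_arith_mean_weighted_iff_of_pos s (fun _ ↦ (#s : ℝ)⁻¹) z
    (fun _ _ ↦ by positivity) hw hz
  rw [← mul_sum, inv_mul_eq_div] at this
  rw [← this, ← geom_mean_pow_card s z hz]
  exact pow_left_inj₀ (prod_nonneg fun i hi ↦ rpow_nonneg (hz i hi) _)
    (div_nonneg (sum_nonneg hz) (Nat.cast_nonneg _)) hs.card_pos.ne'

lemma mul_add_one_le_pow_div {n : ℕ} {c t : ℝ} (hn : n ≠ 0) (hc : 0 ≤ c) (ht : 0 < t) :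
    c * (n + 1) ≤ ((n : ℝ) / (n + 1)) ^ n * ((1 + c * t) ^ (n + 1) / t) := by
  have hn' : (0 : ℝ) < n := by positivity
  -- Bernoulli's inequality for `(1 + v) ^ (n + 1)`, where `1 + v = n (1 + c t) / (n + 1)`
  set v : ℝ := (n * c * t - 1) / (n + 1)
  have hv : -2 ≤ v := by
    rw [le_div_iff₀ (by positivity)]
    nlinarith [mul_nonneg (mul_nonneg hn'.le hc) ht.le]
  have hbern := one_add_mul_le_pow hv (n + 1)
  have h1v : 1 + v = (n : ℝ) / (n + 1) * (1 + c * t) := by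
    simp only [v]; field_simp; ring
  have hlin : 1 + ((n + 1 : ℕ) : ℝ) * v = n * c * t := by
    simp only [v]; push_cast; field_simp; ring
  rw [hlin, h1v, mul_pow, pow_succ] at hbern
  rw [mul_div_assoc', le_div_iff₀ ht]
  refine le_of_mul_le_mul_left ?_ (by positivity : (0 : ℝ) < n / (n + 1))
  calc (n : ℝ) / (n + 1) * (c * (n + 1) * t) = n * c * t := by field_simp
    _ ≤ _ := hbern
    _ = _ := by ring

lemma pow_div_eq_mul_add_one {n : ℕ} {c : ℝ} (hn : n ≠ 0) (hc : c ≠ 0) :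
    ((n : ℝ) / (n + 1)) ^ n * ((1 + c * (c * n)⁻¹) ^ (n + 1) / (c * n)⁻¹) =
      c * (n + 1) := by
  have hn' : (n : ℝ) ≠ 0 := by exact_mod_cast hn
  have : 1 + c * (c * n)⁻¹ = (n + 1) / n := by field_simp
  rw [this, pow_succ, div_pow, div_pow]
  field_simp

end Real

section

variable {ι : Type*} {s : Finset ι} {x : ι → ℝ} {t : ℝ}

lemma prod_add_eq_prod_mul_prod (hx : ∀ i ∈ s, 0 < x i) :
    ∏ i ∈ s, (t + x i) = (∏ i ∈ s, x i) * ∏ i ∈ s, (1 + t * (x i)⁻¹) := by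
  rw [← prod_mul_distrib]
  refine prod_congr rfl fun i hi ↦ ?_
  field_simp [(hx i hi).ne']
  ring

lemma sum_one_add_mul_inv_div_card (hs : s.Nonempty) :
    (∑ i ∈ s, (1 + t * (x i)⁻¹)) / #s = 1 + t * (∑ i ∈ s, (x i)⁻¹) / #s := by
  have : (#s : ℝ) ≠ 0 := by simp [hs.ne_empty]
  rw [sum_add_distrib, ← mul_sum]
  field_simp
  simp

lemma prod_add_le (hx : ∀ i ∈ s, 0 < x i) (ht : 0 ≤ t) :
    ∏ i ∈ s, (t + x i) ≤
      (∏ i ∈ s, x i) * (1 + t * (∑ i ∈ s, (x i)⁻¹) / #s) ^ #s := by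
  rcases s.eq_empty_or_nonempty with rfl | hs
  · simp
  rw [prod_add_eq_prod_mul_prod hx, ← sum_one_add_mul_inv_div_card hs]
  refine mul_le_mul_of_nonneg_left (Real.prod_le_arith_mean_pow_s1 s _ fun i hi ↦ ?_)
    (prod_nonneg fun i hi ↦ (hx i hi).le)
  have := hx i hi
  positivity

lemma prod_add_eq_iff (hs : s.Nonempty) (hx : ∀ i ∈ s, 0 < x i) (ht : 0 < t) :
    ∏ i ∈ s, (t + x i) = (∏ i ∈ s, x i) * (1 + t * (∑ i ∈ s, (x i)⁻¹) / #s) ^ #s ↔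
      ∀ i ∈ s, ∀ j ∈ s, x i = x j := by
  rw [prod_add_eq_prod_mul_prod hx, ← sum_one_add_mul_inv_div_card hs,
    mul_right_inj' (prod_pos hx).ne', Real.prod_eq_arith_mean_pow_iff s _ hs fun i hi ↦ ?_]
  · simp [ht.ne']
  · have := hx i hi
    positivity

end

namespace Polynomial

noncomputable def slopeInf (Q : ℝ[X]) : ℝ :=
  sInf {c : ℝ | ∃ t : ℝ, 0 < t ∧ c = Q.eval t / t}

variable {Q : ℝ[X]}

lemma slopeInf_le (hQ : ∀ t, 0 < t → 0 ≤ Q.eval t) {t : ℝ} (ht : 0 < t) :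
    Q.slopeInf ≤ Q.eval t / t :=
  csInf_le ⟨0, by rintro c ⟨s, hs, rfl⟩; exact div_nonneg (hQ s hs) hs.le⟩ ⟨t, ht, rfl⟩

lemma le_slopeInf {b : ℝ} (h : ∀ t, 0 < t → b ≤ Q.eval t / t) : b ≤ Q.slopeInf :=
  le_csInf ⟨_, 1, one_pos, rfl⟩ <| by rintro c ⟨t, ht, rfl⟩; exact h t ht

lemma slopeInf_le_derivative_eval_zero (hQ : ∀ t, 0 < t → 0 ≤ Q.eval t) (h0 : Q.eval 0 = 0) :
    Q.slopeInf ≤ Q.derivative.eval 0 := by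
  have hslope : Tendsto (slope Q.eval 0) (𝓝[>] 0) (𝓝 (Q.derivative.eval 0)) :=
    (hasDerivAt_iff_tendsto_slope.1 (Q.hasDerivAt 0)).mono_left
      (nhdsWithin_mono 0 fun _ ht ↦ ne_of_gt ht)
  refine ge_of_tendsto hslope ?_
  filter_upwards [self_mem_nhdsWithin] with t ht
  rw [slope_def_field, h0, sub_zero, sub_zero]
  exact slopeInf_le hQ ht

lemma coeff_mul_pow_le_eval (hcoeff : ∀ i, 0 ≤ Q.coeff i) {t : ℝ} (ht : 0 ≤ t) (n : ℕ) :
    Q.coeff n * t ^ n ≤ Q.eval t := by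
  rw [eval_eq_sum_range' (Nat.lt_succ_of_le (le_max_left Q.natDegree n))]
  exact single_le_sum (fun i _ ↦ mul_nonneg (hcoeff i) (pow_nonneg ht i))
    (mem_range.2 (Nat.lt_succ_of_le (le_max_right _ _)))

lemma eval_nonneg_of_coeff_nonneg (hcoeff : ∀ i, 0 ≤ Q.coeff i) {t : ℝ} (ht : 0 ≤ t) :
    0 ≤ Q.eval t :=
  (hcoeff 0).trans (by simpa using coeff_mul_pow_le_eval hcoeff ht 0)

lemma neg_of_mem_roots (hcoeff : ∀ i, 0 ≤ Q.coeff i) (h0 : Q.eval 0 ≠ 0) {r : ℝ}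
    (hr : r ∈ Q.roots) : r < 0 := by
  by_contra! hr0
  have := coeff_mul_pow_le_eval hcoeff hr0 0
  rw [(mem_roots'.1 hr).2, pow_zero, mul_one, coeff_zero_eq_eval_zero] at this
  exact h0 (le_antisymm this (by simpa [coeff_zero_eq_eval_zero] using hcoeff 0))

lemma splits_of_forall_isRoot_im_eq_zero
    (hroots : ∀ z : ℂ, (Q.map (algebraMap ℝ ℂ)).IsRoot z → z.im = 0) : Q.Splits :=
  Splits.of_splits_map (algebraMap ℝ ℂ) (IsAlgClosed.splits _) fun z hz ↦
    ⟨z.re, Complex.ext (by simp) (by simp [hroots z (isRoot_of_mem_roots hz)])⟩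

lemma Splits.eq_C_mul_prod_X_add_C (hQ : Q.Splits) :
    Q = C Q.leadingCoeff * ∏ r : Q.roots, (X + C (-(r : ℝ))) := by
  conv_lhs => rw [hQ.eq_prod_roots]
  rw [← Multiset.map_univ, ← prod_eq_multiset_prod]
  simp [sub_eq_add_neg]

lemma eval_zero_ne_zero_of_derivative_eval_zero_eq {κ : ℝ} (hκ : κ < 1)
    (hQ : ∀ t, 0 < t → 0 ≤ Q.eval t) (hpos : 0 < Q.slopeInf)
    (heq : Q.derivative.eval 0 = κ * Q.slopeInf) : Q.eval 0 ≠ 0 := fun h0 ↦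
  (mul_lt_of_lt_one_left hpos hκ).not_ge (heq ▸ slopeInf_le_derivative_eval_zero hQ h0)

variable {ι : Type*} {s : Finset ι} {x : ι → ℝ} {L : ℝ}

lemma eval_C_mul_prod_X_add_C (t : ℝ) :
    (C L * ∏ i ∈ s, (X + C (x i))).eval t = L * ∏ i ∈ s, (t + x i) := by
  simp [eval_prod]

lemma derivative_C_mul_prod_X_add_C_eval_zero (hx : ∀ i ∈ s, x i ≠ 0) :
    (C L * ∏ i ∈ s, (X + C (x i))).derivative.eval 0 =
      L * (∏ i ∈ s, x i) * ∑ i ∈ s, (x i)⁻¹ := by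
  classical
  rw [derivative_C_mul, derivative_prod_finset, eval_mul, eval_C, mul_assoc, mul_sum]
  simp only [eval_finsetSum, eval_prod, derivative_X_add_C, eval_add, eval_X, eval_C,
    zero_add, mul_one]
  refine congrArg (L * ·) (sum_congr rfl fun i hi ↦ ?_)
  rw [← mul_prod_erase s x hi, mul_comm (x i), mul_assoc, mul_inv_cancel₀ (hx i hi), mul_one]

lemma forall_eq_of_derivative_eval_zero_eq {n : ℕ} (hn : n ≠ 0) (hs : #s = n + 1) (hL : 0 < L)
    (hx : ∀ i ∈ s, 0 < x i) (hQ : Q = C L * ∏ i ∈ s, (X + C (x i)))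
    (heq : Q.derivative.eval 0 = ((n : ℝ) / (n + 1)) ^ n * Q.slopeInf) :
    ∀ i ∈ s, ∀ j ∈ s, x i = x j := by
  have hsne : s.Nonempty := card_pos.1 (by omega)
  set S := ∑ i ∈ s, (x i)⁻¹
  set P := ∏ i ∈ s, x i
  have hS : 0 < S := sum_pos (fun i hi ↦ inv_pos.2 (hx i hi)) hsne
  set c := S / (n + 1)
  have hc : 0 < c := by positivity
  -- the minimum point of the Newton bound `t ↦ P (1 + c t) ^ (n + 1) / t`
  set t₀ := (c * n)⁻¹
  have ht₀ : 0 < t₀ := inv_pos.2 (mul_pos hc (Nat.cast_pos.2 (Nat.pos_of_ne_zero hn)))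
  have heval (t : ℝ) : Q.eval t = L * ∏ i ∈ s, (t + x i) := by
    rw [hQ, eval_C_mul_prod_X_add_C]
  have hQ' : Q.derivative.eval 0 = L * P * (c * (n + 1)) := by
    rw [hQ, derivative_C_mul_prod_X_add_C_eval_zero fun i hi ↦ (hx i hi).ne',
      div_mul_cancel₀ S (by positivity)]
  have hnewton : 1 + t₀ * S / #s = 1 + c * t₀ := by rw [hs]; push_cast; ring
  have hκ : (0 : ℝ) < (n / (n + 1)) ^ n := by positivity
  have hnonneg (t : ℝ) (ht : 0 < t) : 0 ≤ Q.eval t := by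
    rw [heval]
    exact mul_nonneg hL.le (prod_nonneg fun i hi ↦ by linarith [hx i hi])
  have hle := prod_add_le hx ht₀.le
  rw [hnewton, hs] at hle
  have hge : L * ((n / (n + 1)) ^ n * (P * (1 + c * t₀) ^ (n + 1) / t₀)) ≤
      L * ((n / (n + 1)) ^ n * ((∏ i ∈ s, (t₀ + x i)) / t₀)) :=
    calc _ = L * P * ((n / (n + 1)) ^ n * ((1 + c * t₀) ^ (n + 1) / t₀)) := by ring
      _ = Q.derivative.eval 0 := by rw [Real.pow_div_eq_mul_add_one hn hc.ne', hQ']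
      _ ≤ (n / (n + 1)) ^ n * (Q.eval t₀ / t₀) := by
        rw [heq]; gcongr; exact slopeInf_le hnonneg ht₀
      _ = _ := by rw [heval]; ring
  have hge' := (div_le_div_iff_of_pos_right ht₀).1
    (le_of_mul_le_mul_left (le_of_mul_le_mul_left hge hL) hκ)
  have hiff := prod_add_eq_iff hsne hx ht₀
  rw [hnewton, hs] at hiff
  exact hiff.1 (le_antisymm hle hge')

lemma derivative_eval_zero_eq_slopeInf_C_mul_X_add_C_pow {n : ℕ} (hn : n ≠ 0) {a b : ℝ}
    (ha : 0 < a) (hb : 0 < b) :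
    (C b * (X + C a) ^ (n + 1)).derivative.eval 0 =
      ((n : ℝ) / (n + 1)) ^ n * (C b * (X + C a) ^ (n + 1)).slopeInf := by
  set Q := C b * (X + C a) ^ (n + 1)
  set q := b * a ^ (n + 1)
  set c := a⁻¹
  have hq : 0 < q := by positivity
  have hc : 0 < c := inv_pos.2 ha
  have hκ : (0 : ℝ) < (n / (n + 1)) ^ n := by positivity
  have heval (t : ℝ) : Q.eval t = q * (1 + c * t) ^ (n + 1) := by
    simp only [Q, q, c, eval_mul, eval_C, eval_pow, eval_add, eval_X, mul_assoc, ← mul_pow]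
    field_simp
    ring
  have hQ' : Q.derivative.eval 0 = q * (c * (n + 1)) := by
    simp only [Q, q, c, derivative_C_mul, derivative_pow, derivative_X_add_C, eval_mul, eval_C,
      eval_pow, eval_add, eval_X, zero_add, mul_one]
    field_simp
    push_cast
    ring
  have hnonneg (t : ℝ) (ht : 0 < t) : 0 ≤ Q.eval t := by rw [heval]; positivity
  refine le_antisymm ?_ ?_
  · rw [← div_le_iff₀' hκ]
    refine le_slopeInf fun t ht ↦ ?_
    rw [div_le_iff₀' hκ, hQ', heval]
    calc q * (c * (n + 1)) ≤ q * ((n / (n + 1)) ^ n * ((1 + c * t) ^ (n + 1) / t)) :=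
          mul_le_mul_of_nonneg_left (Real.mul_add_one_le_pow_div hn hc.le ht) hq.le
      _ = _ := by ring
  · set t₀ := (c * n)⁻¹
    have ht₀ : 0 < t₀ := inv_pos.2 (mul_pos hc (Nat.cast_pos.2 (Nat.pos_of_ne_zero hn)))
    calc _ ≤ (n / (n + 1)) ^ n * (Q.eval t₀ / t₀) := by
          gcongr; exact slopeInf_le hnonneg ht₀
      _ = q * ((n / (n + 1)) ^ n * ((1 + c * t₀) ^ (n + 1) / t₀)) := by rw [heval]; ring
      _ = _ := by rw [Real.pow_div_eq_mul_add_one hn hc.ne', hQ']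

end Polynomial

/-- Equality Q'(0) = ((k-1)/k)^{k-1} · inf_{t>0} Q(t)/t holds iff
Q(t) = b(t+a)^k for some a, b > 0. -/
theorem stmt_1 (Q : Polynomial ℝ) (k : ℕ) (hk : 2 ≤ k) (hdeg : Q.natDegree = k)
    (hlead : 0 < Q.leadingCoeff)
    (hcoeff : ∀ i, 0 ≤ Q.coeff i)
    (hroots : ∀ z : ℂ, (Q.map (algebraMap ℝ ℂ)).IsRoot z → z.im = 0)
    (hpos : 0 < sInf {c : ℝ | ∃ t : ℝ, 0 < t ∧ c = Q.eval t / t}) :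
    Q.derivative.eval 0
        = (((k : ℝ) - 1) / k) ^ (k - 1) * sInf {c : ℝ | ∃ t : ℝ, 0 < t ∧ c = Q.eval t / t}
      ↔ ∃ a b : ℝ, 0 < a ∧ 0 < b ∧ Q = Polynomial.C b * (Polynomial.X + Polynomial.C a) ^ k := by
  obtain ⟨n, rfl⟩ : ∃ n, k = n + 1 := ⟨k - 1, by omega⟩
  have hn : n ≠ 0 := by omega
  have hκ : ((((n + 1 : ℕ) : ℝ) - 1) / (n + 1 : ℕ)) ^ (n + 1 - 1) = ((n : ℝ) / (n + 1)) ^ n := by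
    simp
  change 0 < Q.slopeInf at hpos
  change _ = _ * Q.slopeInf ↔ _
  rw [hκ]
  constructor
  · intro heq
    have hκ1 : ((n : ℝ) / (n + 1)) ^ n < 1 :=
      pow_lt_one₀ (by positivity) ((div_lt_one (by positivity)).2 (by linarith)) hn
    have h0 := eval_zero_ne_zero_of_derivative_eval_zero_eq hκ1
      (fun t ht ↦ eval_nonneg_of_coeff_nonneg hcoeff ht.le) hpos heq
    have hsplit := splits_of_forall_isRoot_im_eq_zero hroots
    have hx (r : Q.roots) (_ : r ∈ univ) : 0 < -(r : ℝ) :=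
      neg_pos.2 (neg_of_mem_roots hcoeff h0 Multiset.coe_mem)
    have hcard : #(univ : Finset Q.roots) = n + 1 := by
      simp [← hsplit.natDegree_eq_card_roots, hdeg]
    obtain ⟨r₀, -⟩ := card_pos.1 (by omega : 0 < #(univ : Finset Q.roots))
    have hall := forall_eq_of_derivative_eval_zero_eq hn hcard hlead hx
      hsplit.eq_C_mul_prod_X_add_C heq
    refine ⟨-r₀, Q.leadingCoeff, hx r₀ (mem_univ _), hlead,
      hsplit.eq_C_mul_prod_X_add_C.trans ?_⟩
    rw [prod_eq_pow_card fun r _ ↦ by rw [hall r (mem_univ _) r₀ (mem_univ _)], hcard]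
  · rintro ⟨a, b, ha, hb, rfl⟩
    exact derivative_eval_zero_eq_slopeInf_C_mul_X_add_C_pow hn ha hb
end

section
/- If f : [0,∞) → [0,∞) is differentiable at 0 with f(0) ≥ 0, and f^{1/k} is concave on [0,∞), then f'(0) ≥ ((k-1)/k)^{k-1} · inf_{t>0} f(t)/t. -/
/-!
Write `g = f ^ (1/k)` and `m` for the infimum of `f t / t`, so that `g t ≥ (m t) ^ (1/k)`.
For each `t > 0`, concavity puts `g` above its chord from `(0, g 0)` to `(t, (m t) ^ (1/k))` on
`[0, t]`; raising to the `k`-th power, `f` lies above a polynomial touching it at `0`, whose slope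
there bounds `f'(0)` from below. Optimising over `t` (the chord ending at `k g(0) / (k - 1)`)
gives `((k - 1) / k) ^ (k - 1) m` when `g 0 > 0` and `m > 0`; if `m = 0`, letting `t → ∞` gives
`f'(0) ≥ 0`; and when `g 0 = 0` the bound `f t ≥ m t` alone gives `f'(0) ≥ m`.
-/

open Set Filter Topology

lemma HasDerivWithinAt.le_of_eventually_le {f h : ℝ → ℝ} {f' h' x : ℝ}
    (hf : HasDerivWithinAt f f' (Ici x) x) (hh : HasDerivWithinAt h h' (Ici x) x)
    (hx : h x = f x) (hle : ∀ᶠ s in 𝓝[>] x, h s ≤ f s) : h' ≤ f' := by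
  have hdiff := hf.sub hh
  rw [hasDerivWithinAt_iff_tendsto_slope, Ici_sdiff_left] at hdiff
  refine sub_nonneg.mp (ge_of_tendsto hdiff ?_)
  filter_upwards [hle, self_mem_nhdsWithin] with s hs (hxs : x < s)
  rw [slope_def_field, Pi.sub_apply, Pi.sub_apply, hx, sub_self, sub_zero]
  exact div_nonneg (sub_nonneg.mpr hs) (sub_nonneg.mpr hxs.le)

lemma ConcaveOn.add_mul_div_le_of_le {g : ℝ → ℝ} (hg : ConcaveOn ℝ (Ici 0) g)
    {t b s : ℝ} (ht : 0 < t) (hb : b ≤ g t) (hs : s ∈ Icc 0 t) :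
    g 0 + s * ((b - g 0) / t) ≤ g s := by
  have hst : 0 ≤ s / t := div_nonneg hs.1 ht.le
  have hst' : 0 ≤ 1 - s / t := sub_nonneg.mpr ((div_le_one ht).mpr hs.2)
  have hchord := hg.2 self_mem_Ici (mem_Ici.mpr ht.le) hst' hst (sub_add_cancel 1 _)
  have hpoint : (1 - s / t) • (0 : ℝ) + (s / t) • t = s := by
    simp only [smul_eq_mul, mul_zero, zero_add, div_mul_cancel₀ s ht.ne']
  rw [hpoint, smul_eq_mul, smul_eq_mul] at hchord
  calc g 0 + s * ((b - g 0) / t) = (1 - s / t) * g 0 + (s / t) * b := by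
        field_simp; ring
    _ ≤ (1 - s / t) * g 0 + (s / t) * g t := by gcongr
    _ ≤ g s := hchord

/-- On `[0, t]`, `f` lies above `(g 0 + s (b - g 0) / t) ^ k`, with equality at `0`; the bound is
the slope of that polynomial at `0`. -/
lemma le_hasDerivWithinAt_of_concaveOn_pow {f g : ℝ → ℝ} {f' : ℝ} {k : ℕ} (hk : k ≠ 0)
    (hderiv : HasDerivWithinAt f f' (Ici 0) 0) (hg : ConcaveOn ℝ (Ici 0) g)
    (hg0 : ∀ s, 0 ≤ s → 0 ≤ g s) (hfg : ∀ s, 0 ≤ s → f s = g s ^ k)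
    {t b : ℝ} (ht : 0 < t) (hb0 : 0 ≤ b) (hb : b ^ k ≤ f t) :
    k * g 0 ^ (k - 1) * (b - g 0) / t ≤ f' := by
  set d := (b - g 0) / t
  have hbg : b ≤ g t := by
    rwa [hfg t ht.le, pow_le_pow_iff_left₀ hb0 (hg0 t ht.le) hk] at hb
  have hpoly : HasDerivAt (fun s => (g 0 + s * d) ^ k) (k * g 0 ^ (k - 1) * d) 0 := by
    simpa using (((hasDerivAt_id (0 : ℝ)).mul_const d).const_add (g 0)).fun_pow k
  rw [mul_div_assoc]
  refine hderiv.le_of_eventually_le hpoly.hasDerivWithinAt (by simp [hfg 0 le_rfl]) ?_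
  filter_upwards [Ioo_mem_nhdsGT ht] with s hs
  have hs' : s ∈ Icc 0 t := Ioo_subset_Icc_self hs
  have hline := hg.add_mul_div_le_of_le ht hbg hs'
  have hline0 : 0 ≤ g 0 + s * d := by
    have : g 0 + s * d = (1 - s / t) * g 0 + (s / t) * b := by
      simp only [d]; field_simp; ring
    rw [this]
    exact add_nonneg (mul_nonneg (sub_nonneg.mpr ((div_le_one ht).mpr hs'.2)) (hg0 0 le_rfl))
      (mul_nonneg (div_nonneg hs'.1 ht.le) hb0)
  rw [hfg s hs'.1]
  exact pow_le_pow_left₀ hline0 hline k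

lemma sInf_slope_mul_le {f : ℝ → ℝ} (hf : ∀ t, 0 ≤ t → 0 ≤ f t) {t : ℝ} (ht : 0 < t) :
    sInf {c : ℝ | ∃ t : ℝ, 0 < t ∧ c = f t / t} * t ≤ f t := by
  have hbdd : BddBelow {c : ℝ | ∃ t : ℝ, 0 < t ∧ c = f t / t} := by
    refine ⟨0, ?_⟩
    rintro _ ⟨s, hs, rfl⟩
    exact div_nonneg (hf s hs.le) hs.le
  exact (le_div_iff₀ ht).mp (csInf_le hbdd ⟨t, ht, rfl⟩)

lemma sInf_slope_nonneg {f : ℝ → ℝ} (hf : ∀ t, 0 ≤ t → 0 ≤ f t) :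
    0 ≤ sInf {c : ℝ | ∃ t : ℝ, 0 < t ∧ c = f t / t} := by
  refine le_csInf ⟨f 1 / 1, 1, one_pos, rfl⟩ ?_
  rintro _ ⟨s, hs, rfl⟩
  exact div_nonneg (hf s hs.le) hs.le

lemma optimal_chord_slope {n : ℕ} (hn : 0 < n) {a m : ℝ} (ha : 0 < a) (hm : 0 < m) :
    (n + 1 : ℕ) * a ^ n * ((n + 1) * a / n - a) / (((n + 1) * a / n) ^ (n + 1) / m)
      = ((n : ℝ) / (n + 1)) ^ n * m := by
  have hn' : (0 : ℝ) < n := Nat.cast_pos.mpr hn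
  have hb : (n + 1) * a / n - a = a / n := by field_simp; ring
  rw [hb, div_pow, pow_succ, mul_pow, div_pow]
  push_cast
  field_simp
  ring

/-- if f : [0,∞) → [0,∞) is differentiable at 0 and f^{1/k} is
concave on [0,∞) (k ≥ 2), then f'(0) ≥ ((k-1)/k)^{k-1} · inf_{t>0} f(t)/t. -/
theorem stmt_4 (k : ℕ) (hk : 2 ≤ k) (f : ℝ → ℝ) (f' : ℝ)
    (hf : ∀ t, 0 ≤ t → 0 ≤ f t)
    (hderiv : HasDerivWithinAt f f' (Set.Ici 0) 0)
    (hconc : ConcaveOn ℝ (Set.Ici 0) (fun t => f t ^ ((1 : ℝ) / k))) :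
    f' ≥ (((k : ℝ) - 1) / k) ^ (k - 1) * sInf {c : ℝ | ∃ t : ℝ, 0 < t ∧ c = f t / t} := by
  obtain ⟨n, rfl⟩ : ∃ n, k = n + 1 := ⟨k - 1, by omega⟩
  have hn : 0 < n := by omega
  set m := sInf {c : ℝ | ∃ t : ℝ, 0 < t ∧ c = f t / t}
  set g : ℝ → ℝ := fun t => f t ^ ((1 : ℝ) / (n + 1 : ℕ))
  have hg0 : ∀ s, 0 ≤ s → 0 ≤ g s := fun s hs => Real.rpow_nonneg (hf s hs) _
  have hfg : ∀ s, 0 ≤ s → f s = g s ^ (n + 1) := fun s hs => by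
    simp only [g, one_div, Real.rpow_inv_natCast_pow (hf s hs) n.succ_ne_zero]
  have hm0 : 0 ≤ m := sInf_slope_nonneg hf
  have hmt : ∀ t, 0 < t → m * t ≤ f t := fun t ht => sInf_slope_mul_le hf ht
  have hcoef : (((n + 1 : ℕ) : ℝ) - 1) / (n + 1 : ℕ) = n / (n + 1) := by push_cast; ring
  rw [ge_iff_le, Nat.add_sub_cancel, hcoef]
  rcases (hg0 0 le_rfl).eq_or_lt with hg00 | hg00
  · have hf0 : f 0 = 0 := by rw [hfg 0 le_rfl, ← hg00, zero_pow n.succ_ne_zero]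
    have hline : HasDerivWithinAt (fun s => m * s) m (Ici 0) 0 := by
      simpa using ((hasDerivAt_id (0 : ℝ)).const_mul m).hasDerivWithinAt
    have hmf' : m ≤ f' := hderiv.le_of_eventually_le hline (by simp [hf0]) <| by
      filter_upwards [self_mem_nhdsWithin] with s hs using hmt s hs
    have hcoef_le : ((n : ℝ) / (n + 1)) ^ n ≤ 1 :=
      pow_le_one₀ (by positivity) ((div_le_one (by positivity)).mpr (by linarith))
    nlinarith
  rcases hm0.eq_or_lt with hm | hm
  · rw [← hm, mul_zero]
    refine le_of_tendsto (f := fun t => (n + 1 : ℕ) * g 0 ^ (n + 1 - 1) * (0 - g 0) / t)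
      (tendsto_const_nhds.div_atTop tendsto_id) ?_
    filter_upwards [eventually_gt_atTop 0] with t ht
    exact le_hasDerivWithinAt_of_concaveOn_pow n.succ_ne_zero hderiv hconc hg0 hfg ht le_rfl
      (by simpa using hf t ht.le)
  · set b := (n + 1) * g 0 / n
    have hb : 0 < b := by positivity
    have ht : 0 < b ^ (n + 1) / m := by positivity
    have hbt : b ^ (n + 1) ≤ f (b ^ (n + 1) / m) := by
      calc b ^ (n + 1) = m * (b ^ (n + 1) / m) := by field_simp
        _ ≤ _ := hmt _ ht
    rw [← optimal_chord_slope hn hg00 hm]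
    exact le_hasDerivWithinAt_of_concaveOn_pow n.succ_ne_zero hderiv hconc hg0 hfg ht hb.le hbt
end

section
/- A homogeneous polynomial p of degree n in m variables is H-stable (nonvanishing whenever all variables have positive real part) if and only if p(X) ≠ 0 for all X with all coordinates positive real, and for all X, Y with all coordinates positive real, every root of the univariate polynomial t ↦ p(tX − Y) is a positive real number. -/
/-!
By homogeneity `p (c • z) = c ^ n * p z`, so an H-stable `p` does not vanish at any `z` whose
coordinates all lie in one open half-plane through the origin. If `t` is not a positive real, a
single rotation `c` puts every `c * (t * X i - Y i)` into the right half-plane, so `t` is not a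
root. Conversely, if `z` lies in the right half-plane then `I * z = (T + I) * Re z - Y` with
`Y = T * Re z + Im z`, which is positive for `T` large; a zero of `p` at `z` would then be a root
`T + I` of `t ↦ p (t X - Y)` that is not real.
-/

open MvPolynomial Complex

lemma MvPolynomial.IsHomogeneous.eval_smul {σ R : Type*} [CommSemiring R]
    {p : MvPolynomial σ R} {n : ℕ} (hp : p.IsHomogeneous n) (c : R) (z : σ → R) :
    eval (c • z) p = c ^ n * eval z p := by
  rw [eval_eq, eval_eq, Finset.mul_sum]
  refine Finset.sum_congr rfl fun d hd => ?_
  simp only [Pi.smul_apply, smul_eq_mul, mul_pow, Finset.prod_mul_distrib,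
    Finset.prod_pow_eq_pow_sum, ← hp.degree_eq_sum_deg_support hd]
  ring

lemma MvPolynomial.IsHomogeneous.eval_ne_zero_of_forall_re_mul_pos {σ : Type*}
    {p : MvPolynomial σ ℂ} {n : ℕ} (hp : p.IsHomogeneous n)
    (hstable : ∀ z : σ → ℂ, (∀ i, 0 < (z i).re) → eval z p ≠ 0)
    {c : ℂ} {z : σ → ℂ} (hz : ∀ i, 0 < (c * z i).re) : eval z p ≠ 0 := by
  intro h
  exact hstable (c • z) hz (by rw [hp.eval_smul, h, mul_zero])

lemma Complex.exists_forall_re_mul_sub_pos {t : ℂ} (ht : ¬(t.im = 0 ∧ 0 < t.re)) :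
    ∃ c : ℂ, ∀ a b : ℝ, 0 < a → 0 < b → 0 < (c * (t * a - b)).re := by
  by_cases him : t.im = 0
  · have hre : t.re ≤ 0 := not_lt.mp fun h => ht ⟨him, h⟩
    refine ⟨-1, fun a b ha hb => ?_⟩
    simp only [neg_mul, one_mul, neg_re, sub_re, re_mul_ofReal, ofReal_re]
    nlinarith
  · refine ⟨-I * t.im, fun a b ha hb => ?_⟩
    have : (-I * t.im * (t * a - b)).re = t.im ^ 2 * a := by
      simp only [mul_re, mul_im, neg_re, neg_im, I_re, I_im, ofReal_re, ofReal_im, sub_re,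
        sub_im]
      ring
    rw [this]
    positivity

lemma Complex.exists_I_mul_eq_mul_sub {ι : Type*} [Finite ι] {z : ι → ℂ}
    (hz : ∀ i, 0 < (z i).re) :
    ∃ T : ℝ, ∃ Y : ι → ℝ, (∀ i, 0 < Y i) ∧
      ∀ i, I * z i = (T + I) * ((z i).re : ℂ) - (Y i : ℂ) := by
  obtain ⟨M, hM⟩ := Finite.exists_le fun i => -(z i).im / (z i).re
  refine ⟨M + 1, fun i => (M + 1) * (z i).re + (z i).im, fun i => ?_, fun i => ?_⟩
  · have := (div_le_iff₀ (hz i)).mp (hM i)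
    nlinarith [hz i]
  · apply Complex.ext <;> simp

/-- a homogeneous polynomial is H-stable iff it is nonvanishing on
positive real vectors and all roots of t ↦ p(tX − Y) for X, Y > 0 are positive reals. -/
theorem stmt_6 (m n : ℕ) (p : MvPolynomial (Fin m) ℂ) (hp : p.IsHomogeneous n) :
    (∀ z : Fin m → ℂ, (∀ i, 0 < (z i).re) → MvPolynomial.eval z p ≠ 0)
      ↔ ((∀ X : Fin m → ℝ, (∀ i, 0 < X i) →
            MvPolynomial.eval (fun i => (X i : ℂ)) p ≠ 0)
         ∧ ∀ X Y : Fin m → ℝ, (∀ i, 0 < X i) → (∀ i, 0 < Y i) →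
            ∀ t : ℂ, MvPolynomial.eval (fun i => t * (X i : ℂ) - (Y i : ℂ)) p = 0 →
              t.im = 0 ∧ 0 < t.re) := by
  constructor
  · intro hstable
    refine ⟨fun X hX => hstable _ fun i => by simpa using hX i, fun X Y hX hY t hroot => ?_⟩
    by_contra ht
    obtain ⟨c, hc⟩ := exists_forall_re_mul_sub_pos ht
    exact hp.eval_ne_zero_of_forall_re_mul_pos hstable (fun i => hc _ _ (hX i) (hY i)) hroot
  · rintro ⟨-, hroots⟩ z hz hzero
    obtain ⟨T, Y, hY, hIz⟩ := exists_I_mul_eq_mul_sub hz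
    have hroot : eval (fun i => (T + I) * ((z i).re : ℂ) - (Y i : ℂ)) p = 0 := by
      simp_rw [← hIz]
      exact (hp.eval_smul I z).trans (by rw [hzero, mul_zero])
    simpa using (hroots _ Y hz hY _ hroot).1
end

section
/- If p is a homogeneous H-stable polynomial in m variables and Z ∈ ℂ^m has Re(Z_i) ≥ 0 for all i, then |p(Z)| ≥ |p(Re Z_1, …, Re Z_m)|. -/
/-!
Fix `Z` in the open right half-plane and restrict `p` to the complex line `t ↦ Re Z + t Im Z`,
which passes through `Re Z` at `t = 0` and through `Z` at `t = i`. Homogeneity and stability force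
this univariate polynomial to have only real roots: a non-real root `r` could be rotated into the
right half-plane by a scalar. Writing it as `c ∏ (t - rⱼ)` with real `rⱼ`, each factor satisfies
`|0 - rⱼ| ≤ |i - rⱼ|`. The boundary case `Re Zᵢ ≥ 0` follows by continuity.
-/

open Complex

theorem Polynomial.norm_eval_re_le_norm_eval {q : Polynomial ℂ} (hq : ∀ r ∈ q.roots, r.im = 0)
    (z : ℂ) : ‖q.eval (z.re : ℂ)‖ ≤ ‖q.eval z‖ := by
  simp only [(IsAlgClosed.splits q).eval_eq_prod_roots, norm_mul]
  have norm_prod (s : Multiset ℂ) : ‖s.prod‖ = (s.map (‖·‖)).prod := map_multiset_prod normHom s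
  simp only [norm_prod, Multiset.map_map, Function.comp_def]
  gcongr
  refine Multiset.prod_map_le_prod_map₀ _ _ (fun _ _ => norm_nonneg _) fun r hr => ?_
  have hr_real : r = (r.re : ℂ) := Complex.ext rfl (by simp [hq r hr])
  calc ‖(z.re : ℂ) - r‖ = |(z - r).re| := by rw [hr_real]; simp [← ofReal_sub, Complex.norm_real]
    _ ≤ ‖z - r‖ := abs_re_le_norm _

namespace MvPolynomial

variable {σ R : Type*}

def IsHStable (p : MvPolynomial σ ℂ) : Prop :=
  ∀ z : σ → ℂ, (∀ i, 0 < (z i).re) → eval z p ≠ 0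

theorem IsHomogeneous.eval_smul_s7 [CommSemiring R] {p : MvPolynomial σ R} {n : ℕ}
    (hp : p.IsHomogeneous n) (c : R) (z : σ → R) : eval (c • z) p = c ^ n * eval z p := by
  simp only [eval_eq, Finset.mul_sum]
  refine Finset.sum_congr rfl fun d hd => ?_
  simp only [Pi.smul_apply, smul_eq_mul, mul_pow, Finset.prod_mul_distrib,
    Finset.prod_pow_eq_pow_sum, ← hp.degree_eq_sum_deg_support hd]
  ring

noncomputable def restrictLine [CommSemiring R] (p : MvPolynomial σ R) (x y : σ → R) :
    Polynomial R :=
  aeval (fun i => Polynomial.C (x i) + Polynomial.C (y i) * Polynomial.X) p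

theorem eval_restrictLine [CommSemiring R] (p : MvPolynomial σ R) (x y : σ → R) (t : R) :
    (p.restrictLine x y).eval t = eval (x + t • y) p := by
  rw [restrictLine, ← Polynomial.coe_aeval_eq_eval, comp_aeval_apply, ← aeval_eq_eval]
  congr 2
  funext i
  simp only [map_add, map_mul, Polynomial.aeval_C, Polynomial.aeval_X, Algebra.algebraMap_self,
    RingHom.id_apply, Pi.add_apply, Pi.smul_apply, smul_eq_mul]
  ring

theorem IsHStable.im_eq_zero_of_mem_roots_restrictLine {p : MvPolynomial σ ℂ} {n : ℕ}
    (hp : p.IsHomogeneous n) (hst : p.IsHStable) {x y : σ → ℝ} (hx : ∀ i, 0 < x i) {r : ℂ}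
    (hr : r ∈ (p.restrictLine (fun i => (x i : ℂ)) (fun i => (y i : ℂ))).roots) :
    r.im = 0 := by
  by_contra hr_im
  have hroot := Polynomial.isRoot_of_mem_roots hr
  rw [Polynomial.IsRoot, eval_restrictLine] at hroot
  -- `c` has `Re c = (Im r)² > 0` and `Re (c r) = 0`, so `c (x + r y)` has real part `(Im r)² x`.
  set c : ℂ := I * r.im * (starRingEnd ℂ) r
  refine hst (c • ((fun i => (x i : ℂ)) + r • fun i => (y i : ℂ))) (fun i => ?_) ?_
  · have hre : ((c • ((fun i => (x i : ℂ)) + r • fun i => (y i : ℂ))) i).re = r.im ^ 2 * x i := by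
      simp only [Pi.smul_apply, Pi.add_apply, smul_eq_mul, mul_re, I_re, ofReal_re, zero_mul, I_im,
        ofReal_im, mul_zero, sub_self, conj_re, mul_im, one_mul, zero_add, conj_im, mul_neg,
        sub_neg_eq_add, add_re, sub_zero, neg_zero, add_im, c]
      ring
    rw [hre]
    exact mul_pos (by positivity) (hx i)
  · rw [hp.eval_smul_s7, hroot, mul_zero]

theorem IsHStable.norm_eval_re_le {p : MvPolynomial σ ℂ} {n : ℕ}
    (hp : p.IsHomogeneous n) (hst : p.IsHStable) {Z : σ → ℂ} (hZ : ∀ i, 0 < (Z i).re) :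
    ‖eval (fun i => ((Z i).re : ℂ)) p‖ ≤ ‖eval Z p‖ := by
  have h := Polynomial.norm_eval_re_le_norm_eval
    (fun _ hr => hst.im_eq_zero_of_mem_roots_restrictLine hp (y := fun i => (Z i).im) hZ hr) I
  have hI : (fun i => ((Z i).re : ℂ)) + I • (fun i => ((Z i).im : ℂ)) = Z := by
    funext i
    simp only [Pi.add_apply, Pi.smul_apply, smul_eq_mul, mul_comm I, re_add_im]
  rwa [eval_restrictLine, eval_restrictLine, I_re, ofReal_zero, zero_smul, add_zero, hI] at h

end MvPolynomial

/-- for a homogeneous H-stable polynomial p and Z with Re(Z_i) ≥ 0,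
|p(Z)| ≥ |p(Re Z)|. -/
theorem stmt_7 (m n : ℕ) (p : MvPolynomial (Fin m) ℂ) (hp : p.IsHomogeneous n)
    (hst : ∀ z : Fin m → ℂ, (∀ i, 0 < (z i).re) → MvPolynomial.eval z p ≠ 0)
    (Z : Fin m → ℂ) (hZ : ∀ i, 0 ≤ (Z i).re) :
    ‖MvPolynomial.eval Z p‖
      ≥ ‖MvPolynomial.eval (fun i => ((Z i).re : ℂ)) p‖ := by
  let shift (ε : ℝ) : Fin m → ℂ := fun i => Z i + ε
  have hshift : Continuous shift := by fun_prop
  have hshift_re : Continuous fun ε => fun i => ((shift ε i).re : ℂ) := by fun_prop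
  let good : Set ℝ := {ε | ‖MvPolynomial.eval (fun i => ((shift ε i).re : ℂ)) p‖
      ≤ ‖MvPolynomial.eval (shift ε) p‖}
  have hclosed : IsClosed good :=
    isClosed_le ((MvPolynomial.continuous_eval p).comp hshift_re).norm
      ((MvPolynomial.continuous_eval p).comp hshift).norm
  have hpos : Set.Ioi 0 ⊆ good := fun ε hε =>
    MvPolynomial.IsHStable.norm_eval_re_le hp hst fun i => by
      simpa [shift] using add_pos_of_nonneg_of_pos (hZ i) hε
  have hzero : (0 : ℝ) ∈ good :=
    hclosed.closure_subset_iff.mpr hpos (by rw [closure_Ioi]; exact Set.self_mem_Ici)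
  simpa [good, shift] using hzero
end

section
/- If p is a homogeneous H-stable polynomial of degree n in m variables, X, Y ∈ ℝ^m, and X + Y has all coordinates strictly positive, then every complex root of the univariate polynomial t ↦ p(tX + Y) is real. -/
/-!
If `t` is not real, one rotation-and-scaling `w` of the plane turns every point `t x + y` with
`x + y > 0` into a point of the open right half-plane; explicitly `w = i · conj (t - 1) / Im t`
satisfies `Re (w t) = Re w = 1`, so `Re (w (t x + y)) = x + y`. By homogeneity
`p (w (t X + Y)) = wⁿ p (t X + Y)`, so a non-real root `t` would give a zero of `p` in the
right half-polydisk.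
-/

namespace MvPolynomial

theorem IsHomogeneous.eval_const_mul {σ R : Type*} [CommSemiring R] {p : MvPolynomial σ R}
    {n : ℕ} (hp : p.IsHomogeneous n) (c : R) (z : σ → R) :
    eval (fun i => c * z i) p = c ^ n * eval z p := by
  rw [eval_eq, eval_eq, Finset.mul_sum]
  refine Finset.sum_congr rfl fun d hd => ?_
  simp_rw [mul_pow, Finset.prod_mul_distrib, Finset.prod_pow_eq_pow_sum,
    ← hp.degree_eq_sum_deg_support hd]
  ring

end MvPolynomial

theorem Complex.re_mul_ofReal_add_ofReal {t : ℂ} (ht : t.im ≠ 0) (x y : ℝ) :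
    (I * (starRingEnd ℂ) (t - 1) / t.im * (t * x + y)).re = x + y := by
  set w : ℂ := I * (starRingEnd ℂ) (t - 1) / t.im
  have hw : w.re = 1 := by simp [w, div_ofReal_re, ht]
  have hwt : (w * t).re = 1 := by simp [w, mul_re, div_ofReal_re, div_ofReal_im, ht]
  calc (w * (t * x + y)).re = (x * (w * t) + y * w).re := by congr 1; ring
    _ = x + y := by rw [add_re, re_ofReal_mul, re_ofReal_mul, hw, hwt, mul_one, mul_one]

/-- if p is homogeneous H-stable, X, Y ∈ ℝ^m and X + Y > 0
coordinatewise, then every complex root of t ↦ p(tX + Y) is real. -/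
theorem stmt_8 (m n : ℕ) (p : MvPolynomial (Fin m) ℂ) (hp : p.IsHomogeneous n)
    (hst : ∀ z : Fin m → ℂ, (∀ i, 0 < (z i).re) → MvPolynomial.eval z p ≠ 0)
    (X Y : Fin m → ℝ) (hXY : ∀ i, 0 < X i + Y i) :
    ∀ t : ℂ, MvPolynomial.eval (fun i => t * (X i : ℂ) + (Y i : ℂ)) p = 0 → t.im = 0 := by
  intro t hroot
  by_contra ht
  set w : ℂ := Complex.I * (starRingEnd ℂ) (t - 1) / t.im
  refine hst (fun i => w * (t * X i + Y i)) (fun i => ?_) ?_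
  · rw [Complex.re_mul_ofReal_add_ofReal ht]
    exact hXY i
  · rw [hp.eval_const_mul, hroot, mul_zero]
end

section
/- If (p_i) is a sequence of H-stable homogeneous polynomials of degree n in m variables with nonnegative coefficients converging coefficientwise to p, then p is either identically zero or H-stable. -/
/-!
For `p` homogeneous and H-stable, `x` with positive entries and `y` real, every zero of
`t ↦ p(x + t y)` is real: at a non-real zero, homogeneity lets us rescale `x + t y` into the open
right half-plane. Factoring this univariate polynomial over its real roots gives
`|p(x)| ≤ |p(x + i y)|`, i.e. `|p(Re z)| ≤ |p(z)|` whenever `Re z > 0`. This inequality survives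
coefficientwise limits (the supports stay inside the finitely many monomials of degree `n`), and
for a nonzero limit `q` with nonnegative coefficients `q(Re z) > 0`, so `q(z) ≠ 0`.
-/

/-- A real polynomial with nonnegative coefficients is H-stable if it does not
vanish whenever all variables have positive real part. -/
def HStable {m : ℕ} (p : MvPolynomial (Fin m) ℝ) : Prop :=
  ∀ z : Fin m → ℂ, (∀ i, 0 < (z i).re) → (MvPolynomial.aeval z p : ℂ) ≠ 0

open Filter Topology
open scoped Polynomial

namespace MvPolynomial

variable {σ R A : Type*} [CommSemiring R] [CommSemiring A] [Algebra R A]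

theorem IsHomogeneous.aeval_smul {p : MvPolynomial σ R} {n : ℕ} (hp : p.IsHomogeneous n)
    (c : A) (z : σ → A) : MvPolynomial.aeval (c • z) p = c ^ n * MvPolynomial.aeval z p := by
  simp only [aeval_def, eval₂_eq, Finset.mul_sum, Pi.smul_apply, smul_eq_mul, mul_pow,
    Finset.prod_mul_distrib, Finset.prod_pow_eq_pow_sum]
  refine Finset.sum_congr rfl fun d hd => ?_
  have hdeg : ∑ i ∈ d.support, d i = n := by
    rw [← Finsupp.degree_apply, Finsupp.degree_eq_weight_one]
    exact hp (mem_support_iff.mp hd)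
  rw [hdeg]
  ring

theorem IsHomogeneous.support_subset_finsuppAntidiag [Fintype σ] [DecidableEq σ]
    {p : MvPolynomial σ R} {n : ℕ} (hp : p.IsHomogeneous n) : p.support ⊆ Finset.univ.finsuppAntidiag n := by
  intro d hd
  rw [Finset.mem_finsuppAntidiag, ← Finsupp.degree_eq_sum, Finsupp.degree_eq_weight_one]
  exact ⟨hp (mem_support_iff.mp hd), Finset.subset_univ _⟩

theorem aeval_eq_sum_of_support_subset {p : MvPolynomial σ R} {s : Finset (σ →₀ ℕ)}
    (hs : p.support ⊆ s) (z : σ → A) :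
    aeval z p = ∑ d ∈ s, algebraMap R A (p.coeff d) * ∏ i ∈ d.support, z i ^ d i := by
  rw [aeval_def, eval₂_eq]
  exact Finset.sum_subset hs fun d _ hd => by simp [notMem_support_iff.mp hd]

theorem tendsto_aeval_of_tendsto_coeff [TopologicalSpace R] [TopologicalSpace A]
    [IsTopologicalSemiring A] [ContinuousSMul R A] {ι : Type*} {l : Filter ι}
    {p : ι → MvPolynomial σ R} {q : MvPolynomial σ R} {s : Finset (σ →₀ ℕ)}
    (hs : ∀ i, (p i).support ⊆ s)
    (hcoeff : ∀ d, Tendsto (fun i => (p i).coeff d) l (𝓝 (q.coeff d))) (z : σ → A) :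
    Tendsto (fun i => aeval z (p i)) l (𝓝 (aeval z q)) := by
  classical
  have hp i := aeval_eq_sum_of_support_subset
    ((hs i).trans (Finset.subset_union_left (s₂ := q.support))) z
  rw [aeval_eq_sum_of_support_subset Finset.subset_union_right z]
  simp only [hp]
  exact tendsto_finsetSum _ fun d _ =>
    (((continuous_algebraMap R A).tendsto _).comp (hcoeff d)).mul_const _

theorem eval_pos_of_coeff_nonneg {R : Type*} [CommRing R] [LinearOrder R] [IsStrictOrderedRing R]
    {p : MvPolynomial σ R} (hp : p ≠ 0) (hnn : ∀ d, 0 ≤ p.coeff d) {x : σ → R}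
    (hx : ∀ i, 0 < x i) : 0 < eval x p := by
  rw [eval_eq]
  refine Finset.sum_pos (fun d hd => mul_pos ?_ (Finset.prod_pos fun i _ => pow_pos (hx i) _))
    (Finset.nonempty_iff_ne_empty.mpr (support_eq_empty.not.mpr hp))
  exact (hnn d).lt_of_ne' (mem_support_iff.mp hd)

theorem aeval_ofReal {p : MvPolynomial σ ℝ} (x : σ → ℝ) :
    aeval (fun i => (x i : ℂ)) p = eval x p := by
  rw [← coe_aeval_eq_eval]
  exact (comp_aeval_apply (Algebra.ofId ℝ ℂ) (f := x) p).symm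

end MvPolynomial

theorem Polynomial.norm_eval_re_le {F : ℂ[X]} (hF : ∀ a ∈ F.roots, a.im = 0) (z : ℂ) :
    ‖F.eval (z.re : ℂ)‖ ≤ ‖F.eval z‖ := by
  have hsplit := IsAlgClosed.splits F
  simp only [hsplit.eval_eq_prod_roots, norm_mul]
  gcongr
  change (normHom : ℂ →*₀ ℝ) _ ≤ (normHom : ℂ →*₀ ℝ) _
  rw [map_multiset_prod, map_multiset_prod, Multiset.map_map, Multiset.map_map]
  refine Multiset.prod_map_le_prod_map₀ (fun a => ‖(z.re : ℂ) - a‖) (fun a => ‖z - a‖)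
    (fun _ _ => norm_nonneg _) fun a ha => ?_
  have : (z.re : ℂ) - a = ((z - a).re : ℂ) := by
    apply Complex.ext <;> simp [hF a ha]
  rw [this, Complex.norm_real, Real.norm_eq_abs]
  exact Complex.abs_re_le_norm _

open MvPolynomial

namespace HStable

variable {m n : ℕ} {p : MvPolynomial (Fin m) ℝ}

theorem aeval_line_ne_zero (hst : HStable p) (hp : p.IsHomogeneous n) {x y : Fin m → ℝ}
    (hx : ∀ j, 0 < x j) {s : ℂ} (hs : s.im ≠ 0) :
    aeval (fun j => (x j : ℂ) + y j * s) p ≠ 0 := by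
  intro hzero
  -- Multiplying by `μ` makes `y * s` purely imaginary and `x` stay in the right half-plane.
  set μ : ℂ := Complex.I * s.im * (starRingEnd ℂ) s
  refine hst (μ • fun j => (x j : ℂ) + y j * s) (fun j => ?_) ?_
  · have hre : (μ * ((x j : ℂ) + y j * s)).re = s.im ^ 2 * x j := by
      simp only [μ, Complex.mul_re, Complex.mul_im, Complex.add_re, Complex.add_im,
        Complex.ofReal_re, Complex.ofReal_im, Complex.I_re, Complex.I_im, Complex.conj_re,
        Complex.conj_im]
      ring
    rw [Pi.smul_apply, smul_eq_mul, hre]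
    exact mul_pos (by positivity) (hx j)
  · rw [hp.aeval_smul, hzero, mul_zero]

theorem norm_aeval_re_le (hst : HStable p) (hp : p.IsHomogeneous n) {z : Fin m → ℂ}
    (hz : ∀ j, 0 < (z j).re) : ‖aeval (fun j => ((z j).re : ℂ)) p‖ ≤ ‖aeval z p‖ := by
  set F : ℂ[X] :=
    aeval (fun j => Polynomial.C ((z j).re : ℂ) + Polynomial.C ((z j).im : ℂ) * Polynomial.X) p
  have hF (t : ℂ) : F.eval t = aeval (fun j => ((z j).re : ℂ) + (z j).im * t) p := by
    rw [← Polynomial.coe_aeval_eq_eval, ← AlgHom.coe_restrictScalars' ℝ, comp_aeval_apply]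
    simp
  have hroots (a : ℂ) (ha : a ∈ F.roots) : a.im = 0 := by
    by_contra hne
    exact hst.aeval_line_ne_zero hp hz hne (by rw [← hF]; exact (Polynomial.mem_roots'.mp ha).2)
  simpa [hF, Complex.re_add_im] using F.norm_eval_re_le hroots Complex.I

end HStable

/-- a coefficientwise limit of H-stable polynomials in Hom_+(m,n)
is either identically zero or H-stable. -/
theorem stmt_10 (m n : ℕ) (p : ℕ → MvPolynomial (Fin m) ℝ) (q : MvPolynomial (Fin m) ℝ)
    (hhom : ∀ i, (p i).IsHomogeneous n)
    (hnn : ∀ i d, 0 ≤ (p i).coeff d)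
    (hst : ∀ i, HStable (p i))
    (hconv : ∀ d : Fin m →₀ ℕ,
      Filter.Tendsto (fun i => (p i).coeff d) Filter.atTop (nhds (q.coeff d))) :
    q = 0 ∨ HStable q := by
  refine or_iff_not_imp_left.mpr fun hq z hz => ?_
  have hlim (w : Fin m → ℂ) : Tendsto (fun i => aeval w (p i)) atTop (𝓝 (aeval w q)) :=
    tendsto_aeval_of_tendsto_coeff (fun i => (hhom i).support_subset_finsuppAntidiag) hconv w
  have hle : ‖aeval (fun j => ((z j).re : ℂ)) q‖ ≤ ‖aeval z q‖ :=
    le_of_tendsto_of_tendsto' (hlim _).norm (hlim z).norm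
      fun i => (hst i).norm_aeval_re_le (hhom i) hz
  have hpos : 0 < eval (fun j => (z j).re) q :=
    eval_pos_of_coeff_nonneg hq (fun d => ge_of_tendsto' (hconv d) (hnn · d)) hz
  rw [aeval_ofReal, Complex.norm_real, Real.norm_eq_abs, abs_of_pos hpos] at hle
  exact norm_pos_iff.mp (hpos.trans_le hle)
end

section
/- If p is a homogeneous H-stable polynomial of degree n in m variables with nonnegative coefficients, then the polynomial q(x_1,…,x_{m-1}) = (∂p/∂x_m)(x_1,…,x_{m-1},0) is either identically zero or H-stable. -/
/-- q(x_1,…,x_m) = (∂p/∂x_{m+1})(x_1,…,x_m,0): differentiate in the last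
variable and then set it to zero. -/
noncomputable def restrictDeriv {m : ℕ} (p : MvPolynomial (Fin (m + 1)) ℝ) :
    MvPolynomial (Fin m) ℝ :=
  MvPolynomial.aeval
    (Fin.snoc (fun i : Fin m => (MvPolynomial.X i : MvPolynomial (Fin m) ℝ)) 0)
    (MvPolynomial.pderiv (Fin.last m) p)

/-!
Write `p(w, t) = ∑ₖ cₖ(w) tᵏ` with `t` the last variable, so that `q = c₁`. For `w` in the open
right half-space, `t ↦ p(w, t)` has all its roots in the closed left half-plane, hence
`‖p(w, δ)‖ > ‖p(w, 0)‖` for real `δ > 0` as soon as it is nonconstant. So the difference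
quotients `(p(w, δ) - p(w, 0)) / δ` are zero-free on the half-space and tend to `c₁(w)` as
`δ → 0⁺`. Hurwitz's theorem, applied on the complex line through a given point and a point where
`c₁` does not vanish, shows that `c₁` is zero-free as well. Nonconstancy of `t ↦ p(w, t)` comes
from the same argument applied to `δᴰ p(w, 1/δ) → c_D(w)`, the leading coefficient.
-/

open Polynomial Metric Set

namespace MvPolynomial

variable {R : Type*} [CommSemiring R]

noncomputable def polynomialInLast (m : ℕ) :
    MvPolynomial (Fin (m + 1)) R →ₐ[R] Polynomial (MvPolynomial (Fin m) R) :=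
  aeval (Fin.snoc (fun i => Polynomial.C (X i)) Polynomial.X)

variable {m : ℕ}

@[simp]
theorem polynomialInLast_X_last :
    polynomialInLast (R := R) m (X (Fin.last m)) = Polynomial.X := by
  simp [polynomialInLast]

@[simp]
theorem polynomialInLast_X_castSucc (i : Fin m) :
    polynomialInLast (R := R) m (X i.castSucc) = Polynomial.C (X i) := by
  simp [polynomialInLast]

theorem eval₂_polynomialInLast {A : Type*} [CommSemiring A] [Algebra R A] (w : Fin m → A)
    (t : A) (p : MvPolynomial (Fin (m + 1)) R) :
    (polynomialInLast m p).eval₂ (aeval (R := R) w).toRingHom t = aeval (Fin.snoc w t) p := by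
  change Polynomial.eval₂AlgHom (aeval w) t (fun _ => Commute.all _ _) (aeval _ p) = _
  rw [← AlgHom.comp_apply, comp_aeval]
  congr 2
  ext i
  cases i using Fin.lastCases <;> simp

theorem polynomialInLast_pderiv_last (p : MvPolynomial (Fin (m + 1)) R) :
    polynomialInLast m (pderiv (Fin.last m) p) = derivative (polynomialInLast m p) := by
  induction p using MvPolynomial.induction_on with
  | C a => simp [polynomialInLast]
  | add f g hf hg => simp [hf, hg]
  | mul_X f i hf =>
    rw [pderiv_mul, map_add, map_mul, map_mul, hf, map_mul, derivative_mul]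
    cases i using Fin.lastCases with
    | last => simp [add_comm]
    | cast i => simp [pderiv_X_of_ne (Fin.castSucc_lt_last i).ne]

theorem coeff_one_polynomialInLast (p : MvPolynomial (Fin (m + 1)) ℝ) :
    (polynomialInLast m p).coeff 1 = restrictDeriv p := by
  rw [restrictDeriv, ← eval₂_polynomialInLast, polynomialInLast_pderiv_last, aeval_X_left,
    eval₂_at_zero]
  simp [coeff_derivative]

theorem exists_aeval_ofReal_ne_zero {σ : Type*} {c : MvPolynomial σ ℝ} (hc : c ≠ 0) :
    ∃ y : σ → ℝ, aeval (fun i => (y i : ℂ)) c ≠ 0 := by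
  by_contra! h
  refine hc (funext fun y => ?_)
  have := h y
  rw [show (fun i => (y i : ℂ)) = algebraMap ℝ ℂ ∘ y from rfl, aeval_algebraMap_apply] at this
  simpa using this

end MvPolynomial

theorem Complex.le_norm_of_forall_mem_sphere_le_norm {h : ℂ → ℂ} {c : ℂ} {r a : ℝ}
    (hr : 0 < r) (ha : 0 < a) (hd : DifferentiableOn ℂ h (closedBall c r))
    (hne : ∀ s ∈ closedBall c r, h s ≠ 0) (hsphere : ∀ s ∈ sphere c r, a ≤ ‖h s‖) :
    a ≤ ‖h c‖ := by
  have hinv : ‖(h c)⁻¹‖ ≤ a⁻¹ := by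
    refine Complex.norm_le_of_forall_mem_frontier_norm_le isBounded_ball
      ((hd.inv hne).diffContOnCl_ball subset_rfl) (fun s hs => ?_)
      (subset_closure (mem_ball_self hr))
    rw [frontier_ball c hr.ne'] at hs
    rw [Pi.inv_apply, norm_inv]
    exact inv_anti₀ ha (hsphere s hs)
  rw [norm_inv] at hinv
  exact (inv_le_inv₀ (norm_pos_iff.2 (hne c (mem_closedBall_self hr.le))) ha).1 hinv

namespace Polynomial

theorem norm_eval_zero_lt_norm_eval_ofReal {g : ℂ[X]} (hdeg : 0 < g.natDegree)
    (hroots : ∀ w ∈ g.roots, w.re ≤ 0) {ε : ℝ} (hε : 0 < ε) :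
    ‖g.eval 0‖ < ‖g.eval (ε : ℂ)‖ := by
  have hg : g ≠ 0 := ne_zero_of_natDegree_gt hdeg
  by_cases h0 : g.eval 0 = 0
  · rw [h0, norm_zero, norm_pos_iff]
    intro hε0
    have := hroots ε ((mem_roots hg).2 hε0)
    simp only [Complex.ofReal_re] at this
    linarith
  have hsplit := IsAlgClosed.splits g
  have hnorm (x : ℂ) : ‖(g.roots.map (x - ·)).prod‖ = (g.roots.map fun w => ‖x - w‖).prod := by
    rw [← normHom_apply, map_multiset_prod, Multiset.map_map]
    rfl
  rw [hsplit.eval_eq_prod_roots, hsplit.eval_eq_prod_roots, norm_mul, norm_mul, hnorm, hnorm]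
  refine mul_lt_mul_of_pos_left (Multiset.prod_map_lt_prod_map (hsplit.roots_ne_zero hdeg.ne')
    _ _ (fun w hw => ?_) fun w hw => ?_) (by simpa using hg)
  · rw [zero_sub, norm_neg, norm_pos_iff]
    rintro rfl
    exact h0 ((mem_roots hg).1 hw)
  · have hre := hroots w hw
    rw [zero_sub, norm_neg, Complex.norm_def, Complex.norm_def]
    refine Real.sqrt_lt_sqrt (Complex.normSq_nonneg _) ?_
    simp only [Complex.normSq_apply, Complex.sub_re, Complex.sub_im, Complex.ofReal_re,
      Complex.ofReal_im]
    nlinarith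

theorem exists_sphere_eval_ne_zero {G : ℂ[X]} (hG : G ≠ 0) {ρ : ℝ} (hρ : 0 < ρ) :
    ∃ r ∈ Ioc 0 ρ, ∀ s ∈ sphere (0 : ℂ) r, G.eval s ≠ 0 := by
  classical
  obtain ⟨r, hr, hr'⟩ := (Ioc_infinite hρ).exists_notMem_finset (G.roots.toFinset.image (‖·‖))
  refine ⟨r, hr, fun s hs hGs => hr' (Finset.mem_image.2 ⟨s, ?_, ?_⟩)⟩
  · simpa [hG] using hGs
  · simpa using hs

theorem continuous_evalEval {R : Type*} [CommSemiring R] [TopologicalSpace R]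
    [IsTopologicalSemiring R] (p : R[X][X]) :
    Continuous fun x : R × R => p.evalEval x.1 x.2 := by
  induction p using Polynomial.induction_on' with
  | add p q hp hq =>
    simp only [evalEval_add]
    exact hp.add hq
  | monomial n a =>
    simp only [evalEval, eval_monomial, eval_mul, eval_pow, eval_C]
    fun_prop

theorem exists_pos_forall_norm_evalEval_sub_lt (Ψ : ℂ[X][X]) (r : ℝ) {e : ℝ} (he : 0 < e) :
    ∃ δ : ℝ, 0 < δ ∧
      ∀ s ∈ closedBall (0 : ℂ) r, ‖Ψ.evalEval s (δ : ℂ) - (Ψ.coeff 0).eval s‖ < e := by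
  have hF : Continuous fun x : ℝ × ℂ => Ψ.evalEval x.2 (x.1 : ℂ) :=
    (continuous_evalEval Ψ).comp
      (continuous_snd.prodMk (Complex.continuous_ofReal.comp continuous_fst))
  obtain ⟨V, hV, hVclose⟩ := (isCompact_closedBall (0 : ℂ) r).mem_uniformity_of_prod
    (f := fun (δ : ℝ) s => Ψ.evalEval s (δ : ℂ)) hF.continuousOn (mem_univ 0)
    (Metric.dist_mem_uniformity he)
  rw [nhdsWithin_univ] at hV
  obtain ⟨δ, hδV, hδ⟩ :=
    (Filter.Eventually.and (nhdsWithin_le_nhds hV) (self_mem_nhdsWithin (s := Ioi (0 : ℝ)))).exists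
  refine ⟨δ, hδ, fun s hs => ?_⟩
  simpa [dist_eq_norm, evalEval, coeff_zero_eq_eval_zero] using hVclose δ hδV s hs

/-- Hurwitz's theorem for the family `s ↦ Ψ(s, δ)` as `δ → 0⁺`: the locally uniform limit of
zero-free holomorphic functions cannot have an isolated zero. -/
theorem eval_coeff_zero_ne_zero_of_evalEval_ne_zero {Ψ : ℂ[X][X]} (hΨ : Ψ.coeff 0 ≠ 0)
    {ρ : ℝ} (hρ : 0 < ρ)
    (hne : ∀ δ : ℝ, 0 < δ → ∀ s ∈ closedBall (0 : ℂ) ρ, Ψ.evalEval s (δ : ℂ) ≠ 0) :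
    (Ψ.coeff 0).eval 0 ≠ 0 := by
  intro hG0
  set G := Ψ.coeff 0
  obtain ⟨r, ⟨hr, hrρ⟩, hsph⟩ := exists_sphere_eval_ne_zero hΨ hρ
  obtain ⟨s₀, hs₀, hmin⟩ := (isCompact_sphere (0 : ℂ) r).exists_isMinOn
    (NormedSpace.sphere_nonempty.2 hr.le) G.continuous.norm.continuousOn
  set μ := ‖G.eval s₀‖
  have hμ : 0 < μ := norm_pos_iff.2 (hsph s₀ hs₀)
  obtain ⟨δ, hδ, hclose⟩ := exists_pos_forall_norm_evalEval_sub_lt Ψ r (half_pos hμ)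
  have hsphere : ∀ s ∈ sphere (0 : ℂ) r, μ / 2 ≤ ‖Ψ.evalEval s (δ : ℂ)‖ := by
    intro s hs
    have h1 := hclose s (sphere_subset_closedBall hs)
    have h2 : μ ≤ ‖G.eval s‖ := hmin hs
    have h3 := norm_sub_norm_le (G.eval s) (Ψ.evalEval s (δ : ℂ))
    rw [norm_sub_rev] at h3
    linarith
  have h0 := Complex.le_norm_of_forall_mem_sphere_le_norm hr (half_pos hμ)
    (Ψ.eval (C (δ : ℂ))).differentiable.differentiableOn
    (fun s hs => hne δ hδ s (closedBall_subset_closedBall hrρ hs)) hsphere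
  have h1 := hclose 0 (mem_closedBall_self hr.le)
  rw [hG0, sub_zero] at h1
  linarith

/-- Hurwitz's theorem on the open right half-space, reduced to the one-variable case on the
complex line through `z` and a point where `Φ.coeff 0` does not vanish. -/
theorem aeval_coeff_zero_ne_zero {σ : Type*} [Finite σ] {Φ : (MvPolynomial σ ℝ)[X]}
    (hΦ0 : Φ.coeff 0 ≠ 0)
    (hΦ : ∀ w : σ → ℂ, (∀ i, 0 < (w i).re) → ∀ δ : ℝ, 0 < δ →
      Φ.eval₂ (MvPolynomial.aeval w).toRingHom (δ : ℂ) ≠ 0)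
    {z : σ → ℂ} (hz : ∀ i, 0 < (z i).re) : MvPolynomial.aeval z (Φ.coeff 0) ≠ 0 := by
  obtain ⟨y, hy0⟩ := MvPolynomial.exists_aeval_ofReal_ne_zero hΦ0
  set u : σ → ℂ := fun i => y i - z i
  set line : ℂ → σ → ℂ := fun s i => z i + s * u i
  set lineAlgHom : MvPolynomial σ ℝ →ₐ[ℝ] ℂ[X] := MvPolynomial.aeval fun i => C (z i) + X * C (u i)
  have heval (s : ℂ) :
      (evalRingHom s).comp lineAlgHom.toRingHom = (MvPolynomial.aeval (line s)).toRingHom :=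
    MvPolynomial.ringHom_ext (fun a => by simp [lineAlgHom]) fun i => by
      simp [lineAlgHom, line]
      ring
  set Ψ : ℂ[X][X] := Φ.map lineAlgHom.toRingHom
  have hΨ (s δ : ℂ) : Ψ.evalEval s δ = Φ.eval₂ (MvPolynomial.aeval (line s)).toRingHom δ := by
    rw [evalEval, eval_map, ← coe_evalRingHom, hom_eval₂, heval, coe_evalRingHom, eval_C]
  have hcoeff (s : ℂ) : (Ψ.coeff 0).eval s = MvPolynomial.aeval (line s) (Φ.coeff 0) := by
    rw [coeff_map, ← coe_evalRingHom, ← RingHom.comp_apply, heval]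
    rfl
  have hU : IsOpen {s : ℂ | ∀ i, 0 < (line s i).re} := by
    simp only [ofPred_forall]
    exact isOpen_iInter_of_finite fun i => isOpen_lt continuous_const (by fun_prop)
  obtain ⟨ρ, hρ, hρU⟩ := Metric.nhds_basis_closedBall.mem_iff.1
    (hU.mem_nhds (show (0 : ℂ) ∈ _ by simpa [line] using hz))
  have hline0 : line 0 = z := by ext i; simp [line]
  have hline1 : line 1 = fun i => (y i : ℂ) := by ext i; simp [line, u]
  rw [← hline0, ← hcoeff]
  refine eval_coeff_zero_ne_zero_of_evalEval_ne_zero (fun h => hy0 ?_) hρ fun δ hδ s hs => ?_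
  · rw [← hline1, ← hcoeff, h, eval_zero]
  · rw [hΨ]
    exact hΦ _ (hρU hs) δ hδ

end Polynomial

namespace HStable

open MvPolynomial (polynomialInLast eval₂_polynomialInLast coeff_one_polynomialInLast)

variable {m : ℕ} {p : MvPolynomial (Fin (m + 1)) ℝ}

theorem eval₂_polynomialInLast_ne_zero (hp : HStable p) {w : Fin m → ℂ}
    (hw : ∀ i, 0 < (w i).re) {t : ℂ} (ht : 0 < t.re) :
    (polynomialInLast m p).eval₂ (MvPolynomial.aeval w).toRingHom t ≠ 0 := by
  rw [eval₂_polynomialInLast]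
  exact hp _ fun i => by cases i using Fin.lastCases <;> simp [ht, hw]

theorem aeval_leadingCoeff_polynomialInLast_ne_zero (hp : HStable p) {w : Fin m → ℂ}
    (hw : ∀ i, 0 < (w i).re) :
    MvPolynomial.aeval w (polynomialInLast m p).leadingCoeff ≠ 0 := by
  have hP : polynomialInLast m p ≠ 0 := fun h => by
    simpa [h] using hp.eval₂_polynomialInLast_ne_zero (w := 1) (fun _ => by simp) (t := 1)
      (by simp)
  -- `reverse P` has constant term `P.leadingCoeff` and takes the values `δᴰ P(1/δ)`.
  rw [← coeff_zero_reverse]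
  refine Polynomial.aeval_coeff_zero_ne_zero (by simpa using hP) (fun w hw δ hδ => ?_) hw
  have : Invertible ((δ : ℂ)⁻¹) := invertibleOfNonzero (by simpa using hδ.ne')
  have h := eval₂_reverse_eq_zero_iff (MvPolynomial.aeval w).toRingHom ((δ : ℂ)⁻¹)
    (polynomialInLast m p)
  rw [invOf_eq_inv, inv_inv] at h
  rw [Ne, h]
  exact hp.eval₂_polynomialInLast_ne_zero hw (by simpa using hδ)

theorem restrictDeriv_of_ne_zero (hp : HStable p) (hq : restrictDeriv p ≠ 0) :
    HStable (restrictDeriv p) := by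
  intro z hz
  -- `divX P` has constant term `P.coeff 1` and takes the values `(P(δ) - P(0)) / δ`.
  rw [← coeff_one_polynomialInLast, ← coeff_divX]
  refine Polynomial.aeval_coeff_zero_ne_zero (by rwa [coeff_divX, coeff_one_polynomialInLast])
    (fun w hw δ hδ hzero => ?_) hz
  set g := (polynomialInLast m p).map (MvPolynomial.aeval w).toRingHom
  have hg (t : ℂ) : g.eval t = (polynomialInLast m p).eval₂ (MvPolynomial.aeval w).toRingHom t :=
    eval_map _ _
  have hdeg : 0 < g.natDegree := by
    have h1 : 1 ≤ (polynomialInLast m p).natDegree :=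
      le_natDegree_of_ne_zero (by rwa [coeff_one_polynomialInLast])
    refine h1.trans (le_natDegree_of_ne_zero ?_)
    rw [Polynomial.coeff_map]
    exact hp.aeval_leadingCoeff_polynomialInLast_ne_zero hw
  have hroots (r : ℂ) (hr : r ∈ g.roots) : r.re ≤ 0 := not_lt.1 fun hre =>
    hp.eval₂_polynomialInLast_ne_zero hw hre (by rw [← hg]; exact (mem_roots'.1 hr).2)
  have heq : g.eval (δ : ℂ) = g.eval 0 := by
    rw [hg, hg, ← divX_mul_X_add (polynomialInLast m p)]
    simp only [eval₂_add, eval₂_mul, eval₂_X, eval₂_C, hzero, zero_mul, mul_zero]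
  have := norm_eval_zero_lt_norm_eval_ofReal hdeg hroots hδ
  rw [heq] at this
  exact lt_irrefl _ this

end HStable

theorem stmt_11_general (m : ℕ) (p : MvPolynomial (Fin (m + 1)) ℝ)
    (hst : HStable p) :
    restrictDeriv p = 0 ∨ HStable (restrictDeriv p) :=
  or_iff_not_imp_left.2 hst.restrictDeriv_of_ne_zero

/-- if p ∈ Hom_+(m+1, n) is H-stable then
q = (∂p/∂x_{m+1})(·,…,·,0) is either zero or H-stable. -/
theorem stmt_11 (m n : ℕ) (p : MvPolynomial (Fin (m + 1)) ℝ)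
    (hhom : p.IsHomogeneous n) (hnn : ∀ d, 0 ≤ p.coeff d) (hst : HStable p) :
    restrictDeriv p = 0 ∨ HStable (restrictDeriv p) :=
  stmt_11_general m p hst
end

section
/- If p ∈ Hom_+(n,n) is doubly stochastic, i.e., (∂p/∂x_i)(1,…,1) = 1 for all i, then Cap(p) = 1. -/
/-- Cap(p) = inf_{x > 0} p(x)/(x_1 ⋯ x_m). -/
noncomputable def Cap {m : ℕ} (p : MvPolynomial (Fin m) ℝ) : ℝ :=
  sInf {c : ℝ | ∃ x : Fin m → ℝ, (∀ i, 0 < x i) ∧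
    c = MvPolynomial.eval x p / ∏ i, x i}

/-!
Euler's identity evaluated at `(1,…,1)` gives `∑ᵢ ∂ᵢp(1) = n · p(1)`, so `p(1) = 1`: the
coefficients `c_d` of `p` form a probability vector on its support. Weighted AM-GM applied to the
monomials `x^d` then gives `p(x) = ∑_d c_d x^d ≥ ∏_d (x^d)^{c_d} = ∏ᵢ xᵢ^{∑_d c_d dᵢ} = ∏ᵢ xᵢ^{∂ᵢp(1)}`,
which for doubly stochastic `p` is `x₁ ⋯ xₙ`; equality holds at `x = (1,…,1)`.
-/

open MvPolynomial Finset

namespace MvPolynomial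

section CommSemiring

variable {σ R : Type*} [CommSemiring R]

theorem eval_one_eq_sum_coeff (p : MvPolynomial σ R) :
    eval (fun _ => 1) p = ∑ d ∈ p.support, p.coeff d := by
  simp [eval_eq]

theorem eval_one_pderiv_eq_sum_coeff_mul (p : MvPolynomial σ R) (i : σ) :
    eval (fun _ => 1) (pderiv i p) = ∑ d ∈ p.support, p.coeff d * d i := by
  nth_rw 1 [← p.support_sum_monomial_coeff]
  simp only [map_sum, pderiv_monomial, eval_monomial, one_pow, Finsupp.prod, prod_const_one,
    mul_one]

theorem IsHomogeneous.sum_eval_one_pderiv [Fintype σ] {p : MvPolynomial σ R} {n : ℕ}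
    (hp : p.IsHomogeneous n) :
    ∑ i, eval (fun _ => 1) (pderiv i p) = n * eval (fun _ => 1) p := by
  simpa [nsmul_eq_mul] using congrArg (eval fun _ => (1 : R)) hp.sum_X_mul_pderiv

end CommSemiring

variable {σ : Type*} [Fintype σ]

theorem IsHomogeneous.eval_one_eq_one_of_eval_one_pderiv [Nonempty σ] {p : MvPolynomial σ ℝ}
    (hp : p.IsHomogeneous (Fintype.card σ)) (hds : ∀ i, eval (fun _ => (1 : ℝ)) (pderiv i p) = 1) :
    eval (fun _ => 1) p = 1 := by
  have h := hp.sum_eval_one_pderiv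
  simp only [hds, sum_const, card_univ, nsmul_eq_mul, mul_one] at h
  exact (mul_eq_left₀ (Nat.cast_ne_zero.mpr Fintype.card_ne_zero)).mp h.symm

theorem prod_rpow_eval_one_pderiv_le_eval {p : MvPolynomial σ ℝ} (hnn : ∀ d, 0 ≤ p.coeff d)
    (hp1 : eval (fun _ => 1) p = 1) {x : σ → ℝ} (hx : ∀ i, 0 < x i) :
    ∏ i, x i ^ eval (fun _ => 1) (pderiv i p) ≤ eval x p := by
  have hsum : ∑ d ∈ p.support, p.coeff d = 1 := (eval_one_eq_sum_coeff p).symm.trans hp1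
  calc ∏ i, x i ^ eval (fun _ => 1) (pderiv i p)
      = ∏ d ∈ p.support, (∏ i, x i ^ d i) ^ p.coeff d := by
        simp_rw [eval_one_pderiv_eq_sum_coeff_mul, Real.rpow_sum_of_pos (hx _)]
        rw [prod_comm]
        refine prod_congr rfl fun d _ => ?_
        rw [← Real.finsetProd_rpow _ _ fun i _ => pow_nonneg (hx i).le _]
        refine prod_congr rfl fun i _ => ?_
        rw [← Real.rpow_natCast, ← Real.rpow_mul (hx i).le, mul_comm]
    _ ≤ ∑ d ∈ p.support, p.coeff d * ∏ i, x i ^ d i :=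
        Real.geom_mean_le_arith_mean_weighted _ _ _ (fun d _ => hnn d) hsum
          fun d _ => prod_nonneg fun i _ => pow_nonneg (hx i).le _
    _ = eval x p := (eval_eq' x p).symm

end MvPolynomial

theorem cap_eq_one_of_prod_le_eval {m : ℕ} {p : MvPolynomial (Fin m) ℝ}
    (hle : ∀ x : Fin m → ℝ, (∀ i, 0 < x i) → ∏ i, x i ≤ eval x p)
    (hp1 : eval (fun _ => 1) p = 1) : Cap p = 1 := by
  have hmem : (1 : ℝ) ∈ {c : ℝ | ∃ x : Fin m → ℝ, (∀ i, 0 < x i) ∧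
      c = eval x p / ∏ i, x i} :=
    ⟨fun _ => 1, fun _ => one_pos, by simp [hp1]⟩
  have hlb : ∀ c ∈ {c : ℝ | ∃ x : Fin m → ℝ, (∀ i, 0 < x i) ∧
      c = eval x p / ∏ i, x i}, (1 : ℝ) ≤ c := by
    rintro c ⟨x, hx, rfl⟩
    exact (one_le_div (prod_pos fun i _ => hx i)).mpr (hle x hx)
  exact le_antisymm (csInf_le ⟨1, hlb⟩ hmem) (le_csInf ⟨1, hmem⟩ hlb)

/-- a doubly stochastic p ∈ Hom_+(n,n), i.e. with
(∂p/∂x_i)(1,…,1) = 1 for all i, has Cap(p) = 1. -/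
theorem stmt_15 (n : ℕ) (hn : 0 < n) (p : MvPolynomial (Fin n) ℝ)
    (hhom : p.IsHomogeneous n) (hnn : ∀ d, 0 ≤ p.coeff d)
    (hds : ∀ i : Fin n, MvPolynomial.eval (fun _ => (1 : ℝ)) (MvPolynomial.pderiv i p) = 1) :
    Cap p = 1 := by
  have : Nonempty (Fin n) := ⟨⟨0, hn⟩⟩
  have hp1 := IsHomogeneous.eval_one_eq_one_of_eval_one_pderiv (by rwa [Fintype.card_fin]) hds
  refine cap_eq_one_of_prod_le_eval (fun x hx => ?_) hp1
  simpa [hds] using prod_rpow_eval_one_pderiv_le_eval hnn hp1 hx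
end
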